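/- arXiv:2005.01551 — 3 statements merged into one kernel-verified Lean document; each statement's English description precedes it below -/
import Mathlib

section
/- Sharp regularity across the free boundary: Let Ω ⊂ ℝⁿ be open, let f : [0,∞) → ℝ be continuous and satisfy condition (1.2) with constants M > 0 and γ ∈ [0,3), and let u ∈ C(Ω) be a bounded non-negative viscosity solution of Δ∞u = f(u) in Ω. Then for every x₀ ∈ ∂{u > 0} ∩ Ω there exist constants C > 0 and ρ > 0, with C depending only on n, γ, M, ‖u‖_∞ and dist(x₀, ∂Ω), such that u(x) ≤ C|x − x₀|^{4/(3−γ)} for all x ∈ B_ρ(x₀). -/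
/-!
At a free boundary point `x₀` we have `u x₀ = 0`. For `y` near `x₀`, with `d = |y - x₀|`,
compare `u` on `B(y, 2d)` with the cone `ψ(x) = u(y) - b|x - y| + c|x - y|²`, normalized so that
`ψ(y) = u(y)`, `ψ = 0` on `∂B(y, 2d)` and `ψ(x₀) = 3u(y)/8`. Away from its vertex,
`Δ∞ψ = 2c(b - 2c|x - y|)² ≥ u(y)³/(64d⁴)`, so if `f(u) ≤ G` on the ball with `64Gd⁴ < u(y)³`,
the supersolution property forbids `u - ψ` from attaining a negative minimum; then
`0 = u(x₀) ≥ ψ(x₀) > 0`. Hence `u(y)³ ≤ 64 d⁴ sup f(u)`.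

Condition (1.2) gives `f(t) ≤ K t^γ` for small `t`, so a bound `u ≤ A r^α` on `B(x₀, r)`
yields `u³ ≤ 64 K A^γ r^{αγ} (r/3)⁴` on `B(x₀, r/3)`. With `α = 4/(3 - γ)` we have
`3α = αγ + 4`, so the bound `u ≤ A (r/3)^α` follows as soon as `A^{3-γ} ≥ 64 K 3^{αγ}`, and
iterating over the scales `r₀/3^k` gives `u(x) ≤ 3^α A |x - x₀|^α`.
-/

open Set Metric Filter MeasureTheory

/-- The infinity Laplacian of a (C²) function `φ` at `x`:
`Δ∞φ(x) = Σ_{i,j} ∂_iφ(x) ∂_jφ(x) ∂_{ij}φ(x)`. -/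
noncomputable def infLap {n : ℕ} (φ : EuclideanSpace ℝ (Fin n) → ℝ)
    (x : EuclideanSpace ℝ (Fin n)) : ℝ :=
  ∑ i : Fin n, ∑ j : Fin n,
    fderiv ℝ φ x (EuclideanSpace.single i 1) * fderiv ℝ φ x (EuclideanSpace.single j 1) *
      fderiv ℝ (fun y => fderiv ℝ φ y (EuclideanSpace.single i 1)) x (EuclideanSpace.single j 1)

/-- `u` is a viscosity supersolution of `Δ∞u = F(x, u(x))` in `Ω`. -/
def IsViscSupersol {n : ℕ} (Ω : Set (EuclideanSpace ℝ (Fin n)))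
    (u : EuclideanSpace ℝ (Fin n) → ℝ)
    (F : EuclideanSpace ℝ (Fin n) → ℝ → ℝ) : Prop :=
  ∀ φ : EuclideanSpace ℝ (Fin n) → ℝ, ContDiff ℝ 2 φ →
    ∀ x₀ ∈ Ω, φ x₀ = u x₀ → IsLocalMin (fun x => u x - φ x) x₀ →
      infLap φ x₀ ≤ F x₀ (φ x₀)

/-- `u` is a viscosity subsolution of `Δ∞u = F(x, u(x))` in `Ω`. -/
def IsViscSubsol {n : ℕ} (Ω : Set (EuclideanSpace ℝ (Fin n)))
    (u : EuclideanSpace ℝ (Fin n) → ℝ)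
    (F : EuclideanSpace ℝ (Fin n) → ℝ → ℝ) : Prop :=
  ∀ φ : EuclideanSpace ℝ (Fin n) → ℝ, ContDiff ℝ 2 φ →
    ∀ x₀ ∈ Ω, φ x₀ = u x₀ → IsLocalMax (fun x => u x - φ x) x₀ →
      F x₀ (φ x₀) ≤ infLap φ x₀

/-- `u` is a viscosity solution of `Δ∞u = F(x, u(x))` in `Ω`. -/
def IsViscSol {n : ℕ} (Ω : Set (EuclideanSpace ℝ (Fin n)))
    (u : EuclideanSpace ℝ (Fin n) → ℝ)
    (F : EuclideanSpace ℝ (Fin n) → ℝ → ℝ) : Prop :=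
  IsViscSupersol Ω u F ∧ IsViscSubsol Ω u F

/-- Condition (1.2): for every `T > 0` there is `δ₀ > 0` such that
`0 ≤ f(δt) ≤ M δ^γ f(t)` for all `0 < t ≤ T` and `0 < δ ≤ δ₀`. -/
def Cond12 (f : ℝ → ℝ) (M γ : ℝ) : Prop :=
  ∀ T > 0, ∃ δ₀ > 0, ∀ t : ℝ, 0 < t → t ≤ T → ∀ δ : ℝ, 0 < δ → δ ≤ δ₀ →
    0 ≤ f (δ * t) ∧ f (δ * t) ≤ M * δ ^ γ * f t


open Topology Real

section

variable {n : ℕ}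

local notation "E" => EuclideanSpace ℝ (Fin n)

theorem hasFDerivAt_dist_sq {F : Type*} [NormedAddCommGroup F] [InnerProductSpace ℝ F]
    (y x : F) :
    HasFDerivAt (fun v => dist v y ^ 2) (2 • innerSL ℝ (x - y)) x := by
  simpa [dist_eq_norm] using ((hasFDerivAt_id x).sub_const y).norm_sq

theorem innerSL_single_one (w : E) (j : Fin n) :
    innerSL ℝ w (EuclideanSpace.single j 1) = w j := by
  simp [EuclideanSpace.inner_single_right]

theorem sum_sum_mul_mul_add_ite {ι : Type*} [Fintype ι] [DecidableEq ι] (w : ι → ℝ)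
    (a p e : ℝ) :
    ∑ i, ∑ j, a * w i * (a * w j) * (p * w j * w i + if i = j then e else 0)
      = a ^ 2 * p * (∑ i, w i * w i) ^ 2 + a ^ 2 * e * ∑ i, w i * w i := by
  simp only [mul_add, Finset.sum_add_distrib, mul_ite, mul_zero, Finset.sum_ite_eq,
    Finset.mem_univ, if_true, sq, Finset.mul_sum, Finset.sum_mul]
  congr 1
  · exact Finset.sum_congr rfl fun i _ => Finset.sum_congr rfl fun j _ => by ring
  · exact Finset.sum_congr rfl fun i _ => by ring

theorem infLap_eq_of_eventuallyEq_comp_dist_sq {φ : E → ℝ} {h h' : ℝ → ℝ} {h'' : ℝ} {y z : E}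
    (hφ : φ =ᶠ[𝓝 z] fun x => h (dist x y ^ 2))
    (hh : ∀ᶠ t in 𝓝 (dist z y ^ 2), HasDerivAt h (h' t) t)
    (hh' : HasDerivAt h' h'' (dist z y ^ 2)) :
    infLap φ z = 4 * h' (dist z y ^ 2) ^ 2 *
      (4 * h'' * dist z y ^ 4 + 2 * h' (dist z y ^ 2) * dist z y ^ 2) := by
  have hfirst : ∀ᶠ x in 𝓝 z, ∀ j,
      fderiv ℝ φ x (EuclideanSpace.single j 1) = 2 * h' (dist x y ^ 2) * (x j - y j) := by
    have hh_near : ∀ᶠ x in 𝓝 z, HasDerivAt h (h' (dist x y ^ 2)) (dist x y ^ 2) :=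
      (by fun_prop : Continuous fun x : E => dist x y ^ 2).continuousAt.eventually hh
    filter_upwards [hφ.eventuallyEq_nhds, hh_near] with x hφx hhx j
    have hd : HasFDerivAt (fun v => h (dist v y ^ 2))
        (h' (dist x y ^ 2) • 2 • innerSL ℝ (x - y)) x :=
      hhx.comp_hasFDerivAt x (hasFDerivAt_dist_sq y x)
    rw [hφx.fderiv_eq, hd.fderiv]
    simp only [smul_apply, innerSL_single_one, nsmul_eq_mul, Nat.cast_ofNat, smul_eq_mul,
      PiLp.sub_apply]
    ring
  have hsecond : ∀ i j, fderiv ℝ (fun x => fderiv ℝ φ x (EuclideanSpace.single i 1)) z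
      (EuclideanSpace.single j 1) = 4 * h'' * (z j - y j) * (z i - y i) +
        if i = j then 2 * h' (dist z y ^ 2) else 0 := by
    intro i j
    have hd : HasFDerivAt (fun x : E => 2 * h' (dist x y ^ 2) * (x i - y i)) _ z :=
      ((hh'.comp_hasFDerivAt z (hasFDerivAt_dist_sq y z)).const_mul 2).mul
        ((EuclideanSpace.proj (𝕜 := ℝ) i).hasFDerivAt.sub_const (y i))
    rw [Filter.EventuallyEq.fderiv_eq (hfirst.mono fun x hx => hx i), hd.fderiv]
    simp only [add_apply, smul_apply, PiLp.proj_apply, PiLp.single_apply, innerSL_single_one,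
      nsmul_eq_mul, Nat.cast_ofNat, smul_eq_mul, PiLp.sub_apply, Function.comp_apply]
    split_ifs <;> ring
  have hnorm : ∑ i, (z i - y i) * (z i - y i) = dist z y ^ 2 := by
    rw [EuclideanSpace.dist_eq, sq_sqrt (by positivity)]
    simp [Real.dist_eq, sq]
  unfold infLap
  simp only [hfirst.self_of_nhds, hsecond]
  rw [sum_sum_mul_mul_add_ite (fun i => z i - y i), hnorm]
  ring

theorem ContDiffAt.exists_contDiff_eventuallyEq {X : Type*} [NormedAddCommGroup X]
    [NormedSpace ℝ X] [HasContDiffBump X] {g : X → ℝ} {z : X} {k : ℕ}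
    (hg : ContDiffAt ℝ k g z) : ∃ φ : X → ℝ, ContDiff ℝ k φ ∧ φ =ᶠ[𝓝 z] g := by
  obtain ⟨r, hr, hsmooth⟩ := Metric.eventually_nhds_iff_ball.1 (hg.eventually (by simp))
  let bump : ContDiffBump z := ⟨r / 4, r / 2, by positivity, by linarith⟩
  refine ⟨fun x => bump x * g x, contDiff_iff_contDiffAt.2 fun x => ?_, ?_⟩
  · by_cases hx : x ∈ ball z r
    · exact bump.contDiffAt.mul (hsmooth x hx)
    · have hx' : x ∉ tsupport bump := by
        rw [bump.tsupport_eq]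
        exact fun h => hx (closedBall_subset_ball (by linarith : r / 2 < r) h)
      refine (contDiffAt_const (c := (0 : ℝ))).congr_of_eventuallyEq ?_
      filter_upwards [notMem_tsupport_iff_eventuallyEq.1 hx'] with v hv
      simp [hv]
  · filter_upwards [ball_mem_nhds z (by positivity : 0 < r / 4)] with x hx
    rw [bump.one_of_mem_closedBall (ball_subset_closedBall hx), one_mul]

def coneBarrier {X : Type*} [PseudoMetricSpace X] (y : X) (A b c : ℝ) (x : X) : ℝ :=
  A - b * dist x y + c * dist x y ^ 2

theorem continuous_coneBarrier {X : Type*} [PseudoMetricSpace X] (y : X) (A b c : ℝ) :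
    Continuous (coneBarrier y A b c) := by
  unfold coneBarrier
  fun_prop

theorem hasDerivAt_const_sub_mul_sqrt_add_mul (A b c : ℝ) {t : ℝ} (ht : 0 < t) :
    HasDerivAt (fun t => A - b * √t + c * t) (c - b / (2 * √t)) t := by
  refine (((hasDerivAt_const t A).sub ((hasDerivAt_sqrt ht.ne').const_mul b)).add
    ((hasDerivAt_id t).const_mul c)).congr_deriv ?_
  ring

theorem hasDerivAt_const_sub_div_two_mul_sqrt (b c : ℝ) {t : ℝ} (ht : 0 < t) :
    HasDerivAt (fun t => c - b / (2 * √t)) (b / (4 * t * √t)) t := by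
  have hs : 0 < √t := sqrt_pos.2 ht
  refine ((hasDerivAt_const t c).sub ((hasDerivAt_const t b).div
    ((hasDerivAt_sqrt ht.ne').const_mul 2) (by positivity))).congr_deriv ?_
  field_simp
  rw [sq_sqrt ht.le]
  ring

theorem exists_contDiff_eventuallyEq_coneBarrier {y z : E} (hzy : z ≠ y) (A b c : ℝ) :
    ∃ φ : E → ℝ, ContDiff ℝ 2 φ ∧ φ =ᶠ[𝓝 z] coneBarrier y A b c ∧
      infLap φ z = 2 * c * (b - 2 * c * dist z y) ^ 2 := by
  have hdist : ContDiffAt ℝ 2 (fun x : E => dist x y) z :=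
    contDiffAt_id.dist ℝ contDiffAt_const hzy
  have hψ : ContDiffAt ℝ 2 (coneBarrier y A b c) z :=
    (contDiffAt_const.sub (contDiffAt_const.mul hdist)).add (contDiffAt_const.mul (hdist.pow 2))
  obtain ⟨φ, hφ, hφψ⟩ := hψ.exists_contDiff_eventuallyEq
  refine ⟨φ, hφ, hφψ, ?_⟩
  have hs : 0 < dist z y := dist_pos.2 hzy
  have hφ' : φ =ᶠ[𝓝 z] fun x => A - b * √(dist x y ^ 2) + c * dist x y ^ 2 := by
    filter_upwards [hφψ] with x hx
    rw [hx, sqrt_sq dist_nonneg, coneBarrier]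
  have hderiv : ∀ᶠ t in 𝓝 (dist z y ^ 2), HasDerivAt (fun t => A - b * √t + c * t)
      (c - b / (2 * √t)) t :=
    (lt_mem_nhds (by positivity)).mono fun t ht => hasDerivAt_const_sub_mul_sqrt_add_mul A b c ht
  rw [infLap_eq_of_eventuallyEq_comp_dist_sq hφ' hderiv
      (hasDerivAt_const_sub_div_two_mul_sqrt b c (by positivity)), sqrt_sq hs.le]
  field_simp
  ring

theorem coneBarrier_le_of_isViscSupersol {Ω : Set E} {u : E → ℝ} {f : ℝ → ℝ}
    (hsup : IsViscSupersol Ω u fun _ t => f t) {y : E} {R b c : ℝ}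
    (hΩ : closedBall y R ⊆ Ω) (huc : ContinuousOn u (closedBall y R))
    (hu0 : ∀ x ∈ sphere y R, 0 ≤ u x) (hR : u y - b * R + c * R ^ 2 ≤ 0)
    (hf : ∀ z ∈ ball y R, z ≠ y → f (u z) < 2 * c * (b - 2 * c * dist z y) ^ 2) :
    ∀ x ∈ closedBall y R, coneBarrier y (u y) b c x ≤ u x := by
  set ψ := coneBarrier y (u y) b c
  by_contra! hneg
  obtain ⟨x, hx, hux⟩ := hneg
  obtain ⟨z, hz, hmin⟩ := (isCompact_closedBall y R).exists_isMinOn ⟨x, hx⟩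
    (huc.sub (continuous_coneBarrier y (u y) b c).continuousOn)
  set m := u z - ψ z
  have hmin' : ∀ v ∈ closedBall y R, m ≤ u v - ψ v := fun v hv => hmin hv
  have hm : m < 0 := by linarith [hmin' x hx]
  -- `ψ` has a cone singularity at `y`, but `u - ψ` vanishes there, so the minimum is elsewhere.
  have hzy : z ≠ y := by
    rintro rfl
    simp [m, ψ, coneBarrier] at hm
  have hzR : z ∈ ball y R := by
    refine (mem_closedBall.1 hz).lt_of_ne fun hzR => ?_
    have : ψ z ≤ 0 := by simpa [ψ, coneBarrier, hzR] using hR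
    linarith [hu0 z (mem_sphere.2 hzR)]
  obtain ⟨φ, hφ, hφψ, hφz⟩ := exists_contDiff_eventuallyEq_coneBarrier hzy (u y + m) b c
  have hφ_eq : φ =ᶠ[𝓝 z] fun x => ψ x + m := by
    filter_upwards [hφψ] with x hx
    rw [hx]
    simp only [ψ, coneBarrier]
    ring
  have hφz_eq : φ z = u z := by
    rw [hφ_eq.self_of_nhds]
    ring
  have hlocmin : IsLocalMin (fun x => u x - φ x) z := by
    filter_upwards [hφ_eq, isOpen_ball.mem_nhds hzR] with x hx hxR
    rw [hx, hφz_eq, sub_self]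
    linarith [hmin' x (ball_subset_closedBall hxR)]
  have hvisc := hsup φ hφ z (hΩ (ball_subset_closedBall hzR)) hφz_eq hlocmin
  rw [hφz, hφz_eq] at hvisc
  linarith [hf z hzR hzy]

theorem IsViscSupersol.pow_three_le_mul_dist_pow_four {Ω : Set E} {u : E → ℝ} {f : ℝ → ℝ}
    (hsup : IsViscSupersol Ω u fun _ t => f t) (huc : ContinuousOn u Ω)
    (hu0 : ∀ x ∈ Ω, 0 ≤ u x) {x₀ y : E} (hx₀ : u x₀ = 0)
    (hΩ : closedBall y (2 * dist y x₀) ⊆ Ω) {G : ℝ} (hG : 0 ≤ G)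
    (hfG : ∀ z ∈ closedBall y (2 * dist y x₀), f (u z) ≤ G) :
    u y ^ 3 ≤ 64 * G * dist y x₀ ^ 4 := by
  set d := dist y x₀ with hd_def
  by_contra! hlt
  have hU : 0 < u y := lt_of_pow_lt_pow_left₀ 3 (hu0 y (hΩ (mem_closedBall_self (by positivity))))
    (by rw [zero_pow three_ne_zero]; exact (by positivity : 0 ≤ 64 * G * d ^ 4).trans_lt hlt)
  have hd : 0 < d := dist_pos.2 fun hy => by simp [hy, hx₀] at hU
  -- `ψ(y) = u(y)`, `ψ = 0` on the sphere of radius `2d`, and `ψ(x₀) = 3u(y)/8`.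
  have hbarrier := coneBarrier_le_of_isViscSupersol hsup (b := 3 * u y / (4 * d))
    (c := u y / (8 * d ^ 2)) hΩ (huc.mono hΩ)
    (fun x hx => hu0 x (hΩ (sphere_subset_closedBall hx))) (le_of_eq (by field_simp; ring)) ?_
    x₀ (by rw [mem_closedBall, dist_comm]; linarith)
  · simp only [coneBarrier, dist_comm x₀ y, hx₀, ← hd_def] at hbarrier
    field_simp at hbarrier
    linarith
  intro z hz _
  have hs : dist z y < 2 * d := mem_ball.1 hz
  calc f (u z) ≤ G := hfG z (ball_subset_closedBall hz)
    _ < u y ^ 3 * d ^ 2 / (64 * d ^ 6) := by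
      rw [lt_div_iff₀ (by positivity)]
      nlinarith [mul_lt_mul_of_pos_right hlt (pow_pos hd 2)]
    _ ≤ u y ^ 3 * (3 * d - dist z y) ^ 2 / (64 * d ^ 6) := by
      gcongr
      linarith
    _ = 2 * (u y / (8 * d ^ 2)) *
        (3 * u y / (4 * d) - 2 * (u y / (8 * d ^ 2)) * dist z y) ^ 2 := by
      field_simp
      ring

theorem Cond12.exists_le_mul_rpow {f : ℝ → ℝ} {M γ : ℝ} (hf : Cond12 f M γ)
    (hfc : ContinuousOn f (Ici 0)) (hγ : 0 ≤ γ) :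
    ∃ δ > 0, ∃ K ≥ 0, ∀ t ∈ Icc 0 δ, f t ≤ K * t ^ γ := by
  obtain ⟨δ, hδ, hscale⟩ := hf 1 one_pos
  set K := max (M * f 1) 0
  have hpos : ∀ t ∈ Ioc 0 δ, f t ≤ K * t ^ γ := by
    rintro t ⟨ht, htδ⟩
    have h := (hscale 1 one_pos le_rfl t ht htδ).2
    rw [mul_one] at h
    calc f t ≤ M * f 1 * t ^ γ := by linarith
      _ ≤ K * t ^ γ := by gcongr; exact le_max_left _ _
  refine ⟨δ, hδ, K, le_max_right _ _, fun t ⟨ht, htδ⟩ => ?_⟩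
  rcases ht.eq_or_lt with rfl | ht
  · have hf0 : Tendsto f (𝓝[>] 0) (𝓝 (f 0)) :=
      (hfc 0 self_mem_Ici).mono_left (nhdsWithin_mono _ Ioi_subset_Ici_self)
    have hK0 : Tendsto (fun t => K * t ^ γ) (𝓝[>] 0) (𝓝 (K * 0 ^ γ)) :=
      ((continuous_rpow_const hγ).const_mul K).continuousAt.continuousWithinAt.tendsto
    exact le_of_tendsto_of_tendsto hf0 hK0 (eventually_of_mem (Ioc_mem_nhdsGT hδ) hpos)
  · exact hpos t ⟨ht, htδ⟩

theorem le_mul_rpow_of_pow_three_le {γ K A ρ d x : ℝ} (hγ0 : 0 ≤ γ) (hγ3 : γ < 3)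
    (hK : 0 ≤ K) (hA : 0 ≤ A) (hKA : 64 * K * 3 ^ (4 / (3 - γ) * γ) ≤ A ^ (3 - γ))
    (hd0 : 0 ≤ d) (hdρ : d ≤ ρ)
    (hx : x ^ 3 ≤ 64 * (K * (A * (3 * ρ) ^ (4 / (3 - γ))) ^ γ) * d ^ 4) :
    x ≤ A * ρ ^ (4 / (3 - γ)) := by
  set α := 4 / (3 - γ) with hα
  have hα0 : 0 ≤ α := by positivity
  have hρ : 0 ≤ ρ := hd0.trans hdρ
  have hexp : α * γ + 4 = 3 * α := by
    rw [hα]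
    field_simp [(by linarith : (3 : ℝ) - γ ≠ 0)]
    ring
  have hρ4 : ρ ^ (α * γ) * ρ ^ 4 = (ρ ^ α) ^ 3 := by
    rw [← rpow_natCast, ← rpow_natCast, ← rpow_mul hρ, ← rpow_add' hρ] <;> push_cast
    · rw [hexp, mul_comm]
    · positivity
  refine le_of_pow_le_pow_left₀ three_ne_zero (by positivity) ?_
  calc x ^ 3 ≤ 64 * (K * (A * (3 * ρ) ^ α) ^ γ) * ρ ^ 4 := hx.trans (by gcongr)
    _ = 64 * K * 3 ^ (α * γ) * (A ^ γ * (ρ ^ (α * γ) * ρ ^ 4)) := by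
      rw [mul_rpow hA (by positivity), mul_rpow (by norm_num) hρ,
        mul_rpow (by positivity) (by positivity), ← rpow_mul hρ, ← rpow_mul (by norm_num)]
      ring
    _ ≤ A ^ (3 - γ) * (A ^ γ * (ρ ^ (α * γ) * ρ ^ 4)) := by gcongr
    _ = (A * ρ ^ α) ^ 3 := by
      rw [← mul_assoc, ← rpow_add' hA (by norm_num), sub_add_cancel, hρ4, mul_pow, rpow_ofNat]

theorem IsViscSupersol.le_mul_rpow_of_le_mul_three_mul_rpow {Ω : Set E} {u : E → ℝ}
    {f : ℝ → ℝ} (hsup : IsViscSupersol Ω u fun _ t => f t) (huc : ContinuousOn u Ω)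
    (hu0 : ∀ x ∈ Ω, 0 ≤ u x) {x₀ : E} (hx₀ : u x₀ = 0) {γ K A ρ : ℝ}
    (hγ0 : 0 ≤ γ) (hγ3 : γ < 3) (hK : 0 ≤ K) (hA : 0 ≤ A)
    (hKA : 64 * K * 3 ^ (4 / (3 - γ) * γ) ≤ A ^ (3 - γ)) (hΩ : closedBall x₀ (3 * ρ) ⊆ Ω)
    (hf : ∀ x ∈ closedBall x₀ (3 * ρ), f (u x) ≤ K * u x ^ γ)
    (hu : ∀ x ∈ closedBall x₀ (3 * ρ), u x ≤ A * (3 * ρ) ^ (4 / (3 - γ))) :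
    ∀ x ∈ closedBall x₀ ρ, u x ≤ A * ρ ^ (4 / (3 - γ)) := by
  intro y hy
  have hd : dist y x₀ ≤ ρ := hy
  have hρ : 0 ≤ ρ := dist_nonneg.trans hd
  have hsub : closedBall y (2 * dist y x₀) ⊆ closedBall x₀ (3 * ρ) :=
    closedBall_subset_closedBall' (by linarith)
  refine le_mul_rpow_of_pow_three_le hγ0 hγ3 hK hA hKA dist_nonneg hd ?_
  refine hsup.pow_three_le_mul_dist_pow_four huc hu0 hx₀ (hsub.trans hΩ) (by positivity)
    fun z hz => (hf z (hsub hz)).trans ?_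
  gcongr
  exacts [hu0 z (hΩ (hsub hz)), hu z (hsub hz)]

theorem le_mul_rpow_dist_of_forall_closedBall_div_pow {X : Type*} [MetricSpace X] {u : X → ℝ}
    {x₀ : X} {A r α : ℝ} (hA : 0 ≤ A) (hα : 0 < α) (hx₀ : u x₀ ≤ 0)
    (h : ∀ k : ℕ, ∀ x ∈ closedBall x₀ (r / 3 ^ k), u x ≤ A * (r / 3 ^ k) ^ α) :
    ∀ x ∈ ball x₀ r, u x ≤ A * 3 ^ α * dist x x₀ ^ α := by
  intro x hx
  rcases eq_or_ne x x₀ with rfl | hne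
  · exact hx₀.trans (by positivity)
  have hd : 0 < dist x x₀ := dist_pos.2 hne
  have hr : 0 < r := hd.trans (mem_ball.1 hx)
  obtain ⟨k, hk, hk'⟩ := exists_nat_pow_near ((one_le_div hd).2 (mem_ball.1 hx).le)
    (by norm_num : (1 : ℝ) < 3)
  have hpow : (0 : ℝ) < 3 ^ k := by positivity
  rw [le_div_iff₀ hd, mul_comm, ← le_div_iff₀ hpow] at hk
  rw [div_lt_iff₀ hd, pow_succ, mul_assoc, mul_comm, ← div_lt_iff₀ hpow] at hk'
  calc u x ≤ A * (r / 3 ^ k) ^ α := h k x (mem_closedBall.2 hk)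
    _ ≤ A * (3 * dist x x₀) ^ α := by gcongr
    _ = A * 3 ^ α * dist x x₀ ^ α := by rw [mul_rpow (by norm_num) hd.le, mul_assoc]

theorem eq_zero_of_mem_frontier_setOf_pos {X : Type*} [TopologicalSpace X] {Ω : Set X}
    {u : X → ℝ} (hΩ : IsOpen Ω) (huc : ContinuousOn u Ω) {x : X}
    (hx : x ∈ frontier {x | x ∈ Ω ∧ 0 < u x}) (hxΩ : x ∈ Ω) (hu0 : 0 ≤ u x) : u x = 0 := by
  have hopen : IsOpen {x | x ∈ Ω ∧ 0 < u x} := huc.isOpen_inter_preimage hΩ isOpen_Ioi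
  rw [hopen.frontier_eq] at hx
  exact le_antisymm (not_lt.1 fun h => hx.2 ⟨hxΩ, h⟩) hu0

end

theorem regularity_across_free_boundary_general {n : ℕ} (Ω : Set (EuclideanSpace ℝ (Fin n)))
    (hΩo : IsOpen Ω)
    (f : ℝ → ℝ) (M γ : ℝ) (hγ0 : 0 ≤ γ) (hγ3 : γ < 3)
    (hfc : ContinuousOn f (Ici 0)) (hf : Cond12 f M γ)
    (u : EuclideanSpace ℝ (Fin n) → ℝ)
    (huc : ContinuousOn u Ω) (hu0 : ∀ x ∈ Ω, 0 ≤ u x)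
    (hsol : IsViscSol Ω u (fun _ t => f t))
    (x₀ : EuclideanSpace ℝ (Fin n))
    (hx₀ : x₀ ∈ frontier {x | x ∈ Ω ∧ 0 < u x} ∩ Ω) :
    ∃ C > (0 : ℝ), ∃ ρ > (0 : ℝ), ball x₀ ρ ⊆ Ω ∧
      ∀ x ∈ ball x₀ ρ, u x ≤ C * dist x x₀ ^ (4 / (3 - γ)) := by
  have hux₀ : u x₀ = 0 := eq_zero_of_mem_frontier_setOf_pos hΩo huc hx₀.1 hx₀.2 (hu0 x₀ hx₀.2)
  obtain ⟨δ, hδ, K, hK, hfK⟩ := hf.exists_le_mul_rpow hfc hγ0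
  obtain ⟨r, hr, hrΩ⟩ : ∃ r > 0, ∀ x ∈ closedBall x₀ r, x ∈ Ω ∧ u x ≤ δ :=
    nhds_basis_closedBall.eventually_iff.1 ((hΩo.eventually_mem hx₀.2).and
      ((huc.continuousAt (hΩo.mem_nhds hx₀.2)).eventually (ge_mem_nhds (by rwa [hux₀]))))
  set α := 4 / (3 - γ)
  obtain ⟨A, hKA, hδA⟩ := (((tendsto_rpow_atTop (by linarith : 0 < 3 - γ)).eventually_ge_atTop
    (64 * K * 3 ^ (α * γ))).and (eventually_ge_atTop (δ / r ^ α))).exists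
  have hA : 0 < A := (by positivity : 0 < δ / r ^ α).trans_le hδA
  have hdecay : ∀ k : ℕ, ∀ x ∈ closedBall x₀ (r / 3 ^ k), u x ≤ A * (r / 3 ^ k) ^ α := by
    intro k
    induction k with
    | zero =>
      simp only [pow_zero, div_one]
      exact fun x hx => (hrΩ x hx).2.trans ((div_le_iff₀ (by positivity)).1 hδA)
    | succ k ih =>
      have h3 : 3 * (r / 3 ^ (k + 1)) = r / 3 ^ k := by
        rw [pow_succ]
        field_simp
      have hsub : closedBall x₀ (3 * (r / 3 ^ (k + 1))) ⊆ closedBall x₀ r :=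
        h3 ▸ closedBall_subset_closedBall (div_le_self hr.le (one_le_pow₀ (by norm_num)))
      exact hsol.1.le_mul_rpow_of_le_mul_three_mul_rpow huc hu0 hux₀ hγ0 hγ3 hK hA.le hKA
        (fun x hx => (hrΩ x (hsub hx)).1)
        (fun x hx => hfK (u x) ⟨hu0 x (hrΩ x (hsub hx)).1, (hrΩ x (hsub hx)).2⟩) (h3 ▸ ih)
  exact ⟨A * 3 ^ α, by positivity, r, hr, fun x hx => (hrΩ x (ball_subset_closedBall hx)).1,
    le_mul_rpow_dist_of_forall_closedBall_div_pow hA.le (by positivity) hux₀.le hdecay⟩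

/-- Sharp regularity across the free boundary (Theorem 3.1). -/
theorem regularity_across_free_boundary {n : ℕ} (Ω : Set (EuclideanSpace ℝ (Fin n)))
    (hΩo : IsOpen Ω)
    (f : ℝ → ℝ) (M γ : ℝ) (hM : 0 < M) (hγ0 : 0 ≤ γ) (hγ3 : γ < 3)
    (hfc : ContinuousOn f (Ici 0)) (hf : Cond12 f M γ)
    (u : EuclideanSpace ℝ (Fin n) → ℝ)
    (huc : ContinuousOn u Ω) (hu0 : ∀ x ∈ Ω, 0 ≤ u x)
    (hub : ∃ B, ∀ x ∈ Ω, u x ≤ B)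
    (hsol : IsViscSol Ω u (fun _ t => f t))
    (x₀ : EuclideanSpace ℝ (Fin n))
    (hx₀ : x₀ ∈ frontier {x | x ∈ Ω ∧ 0 < u x} ∩ Ω) :
    ∃ C > (0 : ℝ), ∃ ρ > (0 : ℝ), ball x₀ ρ ⊆ Ω ∧
      ∀ x ∈ ball x₀ ρ, u x ≤ C * dist x x₀ ^ (4 / (3 - γ)) :=
  regularity_across_free_boundary_general Ω hΩo f M γ hγ0 hγ3 hfc hf u huc hu0 hsol x₀ hx₀
end

section
/- Plateau formation: Let γ ∈ [0,3), λ > 0, and let f : [0,∞) → ℝ be continuous, non-negative, non-decreasing, with f(0) = 0 and f(t) ≥ λ t^γ for all t ≥ 0. Set Υ := (λ(3−γ)⁴/(64(1+γ)))^{1/(3−γ)}. Let x₀ ∈ ℝⁿ, r > 0, α_r > 0, and let u ∈ C(B̄_r(x₀)) be the non-negative viscosity solution of Δ∞u = f(u) in B_r(x₀) with u = α_r on ∂B_r(x₀). If R := r − (α_r/Υ)^{(3−γ)/4} > 0, then u ≡ 0 on the closed ball B̄_R(x₀). -/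
open Set Metric Filter MeasureTheory

/-!
The proof compares `u` with the radial barrier `Φ(x) = Υ |x - z|^(4/(3-γ))` centred at a point
`z ∈ B̄_R(x₀)`. The choice of `Υ` makes `Φ` a classical solution of `Δ∞Φ = λ Φ^γ` away from `z`,
and the choice of `R` makes `Φ ≥ α = u` on `∂B_r(x₀)`. If `u(z) > 0`, then `u - Φ` attains a
positive maximum `M` at an interior point `xs`.
* If `xs ≠ z`, the second-order Taylor polynomial of `Φ` in the variable `|x - z|²`, with its
  quadratic coefficient raised by `ε`, touches `u - M` from above at `xs`, so as `ε → 0`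
  `λ (Φ(xs) + M)^γ ≤ f(u(xs)) ≤ Δ∞Φ(xs) = λ Φ(xs)^γ`, which is absurd since `γ > 0`.
* If `xs = z`, then `u ≤ u(z) + Υ |x - z|^(4/(3-γ))` near `z`. Sliding the paraboloid
  `u(z) + κ |x - z|²` down onto `u` in a ball `B_ρ(z)` gives points with `u ≥ u(z)` where
  `f(u) ≤ 64 Υ³ ρ^(4γ/(3-γ))`; as `ρ → 0` this contradicts `f(u) ≥ λ u(z)^γ > 0`.
-/

open Topology

theorem eventually_le_quadratic_of_hasDerivAt {g g' : ℝ → ℝ} {s g'' c : ℝ}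
    (hg : ∀ᶠ t in 𝓝 s, HasDerivAt g (g' t) t) (hg' : HasDerivAt g' g'' s) (hc : g'' < 2 * c) :
    ∀ᶠ t in 𝓝 s, g t ≤ g s + g' s * (t - s) + c * (t - s) ^ 2 := by
  set k : ℝ → ℝ := fun t => g s + g' s * (t - s) + c * (t - s) ^ 2 - g t
  have hk : ∀ᶠ t in 𝓝 s, HasDerivAt k (g' s + 2 * c * (t - s) - g' t) t := by
    filter_upwards [hg] with t ht
    have hquad : HasDerivAt (fun t => g s + g' s * (t - s) + c * (t - s) ^ 2)
        (g' s + 2 * c * (t - s)) t := by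
      have hlin : HasDerivAt (fun t : ℝ => t - s) 1 t := (hasDerivAt_id' t).sub_const s
      exact (((hlin.const_mul (g' s)).const_add (g s)).fun_add
        ((hlin.fun_pow 2).const_mul c)).congr_deriv (by ring)
    exact hquad.sub ht
  have hderiv2 : deriv (deriv k) s = 2 * c - g'' := by
    have hk' : deriv k =ᶠ[𝓝 s] fun t => g' s + 2 * c * (t - s) - g' t :=
      hk.mono fun t ht => ht.deriv
    rw [hk'.deriv_eq]
    have := ((((hasDerivAt_id s).sub_const s).const_mul (2 * c)).const_add (g' s)).fun_sub hg'
    simpa using this.deriv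
  have hmin : IsLocalMin k s := isLocalMin_of_deriv_deriv_pos (by linarith)
    (by simpa using hk.self_of_nhds.deriv) hk.self_of_nhds.continuousAt
  filter_upwards [hmin] with t ht
  simp only [k, sub_self] at ht
  linarith

theorem ContinuousOn.exists_isLocalMax_mem_ball {X : Type*} [PseudoMetricSpace X]
    [ProperSpace X] {w : X → ℝ} {x₀ z : X} {r : ℝ} (hw : ContinuousOn w (closedBall x₀ r))
    (hz : z ∈ closedBall x₀ r) (hbd : ∀ x ∈ sphere x₀ r, w x < w z) :
    ∃ y ∈ ball x₀ r, IsLocalMax w y ∧ w z ≤ w y := by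
  obtain ⟨y, hy, hmax⟩ := (isCompact_closedBall x₀ r).exists_isMaxOn ⟨z, hz⟩ hw
  have hyball : y ∈ ball x₀ r :=
    (mem_closedBall.1 hy).lt_of_ne fun hyr => (hbd y (mem_sphere.1 hyr)).not_ge (hmax hz)
  exact ⟨y, hyball, hmax.isLocalMax (mem_of_superset (isOpen_ball.mem_nhds hyball)
    ball_subset_closedBall), hmax hz⟩

theorem le_mul_sq_rpow_of_rpow_le {α Υ γ t : ℝ} (hα : 0 ≤ α) (hΥ : 0 < Υ) (hγ : γ < 3)
    (ht : (α / Υ) ^ ((3 - γ) / 4) ≤ t) : α ≤ Υ * (t ^ 2) ^ (2 / (3 - γ)) := by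
  have hd : 0 ≤ (α / Υ) ^ ((3 - γ) / 4) := by positivity
  have hexp : (3 - γ) / 4 * ((2 : ℕ) * (2 / (3 - γ))) = 1 := by
    field_simp [(by linarith : 3 - γ ≠ 0)]; norm_num
  calc α = Υ * (((α / Υ) ^ ((3 - γ) / 4)) ^ 2) ^ (2 / (3 - γ)) := by
        rw [← Real.rpow_natCast, ← Real.rpow_mul (by positivity), ← Real.rpow_mul (by positivity),
          hexp, Real.rpow_one, mul_div_cancel₀ _ hΥ.ne']
    _ ≤ Υ * (t ^ 2) ^ (2 / (3 - γ)) := by gcongr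

/-- The left side is `Δ∞(Υ |x - z|^(2q))` at a point where `|x - z|² = s`
(`infLap_comp_norm_sub_sq`). -/
theorem rpow_barrier_identity {γ lam Υ q s : ℝ} (hΥ : 0 < Υ) (hs : 0 < s) (hq : q * (3 - γ) = 2)
    (hΥpow : Υ ^ (3 - γ) = lam * (3 - γ) ^ 4 / (64 * (1 + γ))) :
    16 * (Υ * q * s ^ (q - 1)) ^ 2 * (Υ * q * (q - 1) * s ^ (q - 2)) * s ^ 2 +
      8 * (Υ * q * s ^ (q - 1)) ^ 3 * s = lam * (Υ * s ^ q) ^ γ := by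
  have hγ : 1 + γ ≠ 0 := fun h => by
    rw [h, mul_zero, div_zero] at hΥpow
    exact (Real.rpow_pos_of_pos hΥ _).ne' hΥpow
  have hs1 : s ^ (q - 1) = s ^ (q - 2) * s := by
    rw [← Real.rpow_add_one hs.ne']; ring_nf
  have hsγ : (Υ * s ^ q) ^ γ = Υ ^ γ * ((s ^ (q - 2)) ^ 3 * s ^ 4) := by
    rw [Real.mul_rpow hΥ.le (by positivity), ← Real.rpow_mul hs.le, ← Real.rpow_mul_natCast hs.le,
      ← Real.rpow_natCast s 4, ← Real.rpow_add hs]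
    congr 2
    push_cast
    linear_combination -hq
  have hΥ3 : Υ ^ 3 = Υ ^ γ * Υ ^ (3 - γ) := by
    rw [← Real.rpow_add hΥ, ← Real.rpow_natCast]; norm_num
  have hcoef : q ^ 3 * (16 * q - 8) * Υ ^ (3 - γ) = lam := by
    rw [hΥpow, mul_div_assoc', div_eq_iff (mul_ne_zero (by norm_num) hγ)]
    linear_combination lam * (16 * (q * (3 - γ) + 2) * ((q * (3 - γ)) ^ 2 + 4) -
      8 * (3 - γ) * ((q * (3 - γ)) ^ 2 + 2 * (q * (3 - γ)) + 4)) * hq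
  rw [hs1, hsγ, ← hcoef]
  linear_combination (8 * q ^ 3 * (2 * q - 1) * (s ^ (q - 2)) ^ 3 * s ^ 4) * hΥ3

theorem hasFDerivAt_norm_sub_sq {H : Type*} [NormedAddCommGroup H] [InnerProductSpace ℝ H]
    (z y : H) : HasFDerivAt (fun y : H => ‖y - z‖ ^ 2) (2 • innerSL ℝ (y - z)) y := by
  simpa using ((hasFDerivAt_id y).sub_const z).norm_sq

section

variable {n : ℕ}

local notation "E" => EuclideanSpace ℝ (Fin n)

theorem fderiv_comp_norm_sub_sq_single {g g' : ℝ → ℝ} (z y : E) (i : Fin n)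
    (hg : HasDerivAt g (g' (‖y - z‖ ^ 2)) (‖y - z‖ ^ 2)) :
    fderiv ℝ (fun y => g (‖y - z‖ ^ 2)) y (EuclideanSpace.single i 1) =
      g' (‖y - z‖ ^ 2) * (2 * (y i - z i)) := by
  have h : HasFDerivAt (fun y => g (‖y - z‖ ^ 2)) (g' (‖y - z‖ ^ 2) • 2 • innerSL ℝ (y - z)) y :=
    hg.comp_hasFDerivAt y (hasFDerivAt_norm_sub_sq z y)
  simp [h.fderiv, EuclideanSpace.inner_single_right]

theorem infLap_comp_norm_sub_sq {g g' : ℝ → ℝ} {g'' : ℝ} (z x : E)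
    (hg : ∀ t, HasDerivAt g (g' t) t) (hg' : HasDerivAt g' g'' (‖x - z‖ ^ 2)) :
    infLap (fun y => g (‖y - z‖ ^ 2)) x =
      16 * g' (‖x - z‖ ^ 2) ^ 2 * g'' * (‖x - z‖ ^ 2) ^ 2 +
        8 * g' (‖x - z‖ ^ 2) ^ 3 * ‖x - z‖ ^ 2 := by
  set s := ‖x - z‖ ^ 2 with hs
  have hsecond : ∀ i j : Fin n,
      fderiv ℝ (fun y => fderiv ℝ (fun y => g (‖y - z‖ ^ 2)) y (EuclideanSpace.single i 1)) x
        (EuclideanSpace.single j 1) =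
      g'' * (2 * (x j - z j)) * (2 * (x i - z i)) + g' s * (2 * if i = j then 1 else 0) := by
    intro i j
    have hfun : (fun y => fderiv ℝ (fun y => g (‖y - z‖ ^ 2)) y (EuclideanSpace.single i 1)) =
        fun y => g' (‖y - z‖ ^ 2) * (2 * (y i - z i)) := by
      ext y; exact fderiv_comp_norm_sub_sq_single z y i (hg _)
    have hcoord : HasFDerivAt (fun y : E => 2 * (y i - z i)) ((2 : ℝ) • EuclideanSpace.proj i) x :=
      ((EuclideanSpace.proj (𝕜 := ℝ) i).hasFDerivAt.sub_const (z i)).const_mul 2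
    have hprod : HasFDerivAt (fun y : E => g' (‖y - z‖ ^ 2) * (2 * (y i - z i))) _ x :=
      (hg'.comp_hasFDerivAt x (hasFDerivAt_norm_sub_sq z x)).mul hcoord
    rw [hfun, hprod.fderiv]
    simp only [Function.comp_apply, map_sub, add_apply, smul_apply, PiLp.proj_apply,
      PiLp.single_apply, smul_eq_mul, mul_ite, mul_one, mul_zero, sub_apply, coe_innerSL_apply,
      EuclideanSpace.inner_single_right, Real.ringHom_apply, one_mul, nsmul_eq_mul,
      Nat.cast_ofNat, ← hs]
    ring
  simp only [infLap, fderiv_comp_norm_sub_sq_single z x _ (hg _), hsecond, ← hs]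
  have hsum : ∑ i, (x i - z i) ^ 2 = s := by
    rw [hs, EuclideanSpace.real_norm_sq_eq]; simp
  calc ∑ i, ∑ j, g' s * (2 * (x i - z i)) * (g' s * (2 * (x j - z j))) *
        (g'' * (2 * (x j - z j)) * (2 * (x i - z i)) + g' s * (2 * if i = j then 1 else 0))
      = ∑ i, (16 * g' s ^ 2 * g'' * ((x i - z i) ^ 2 * ∑ j, (x j - z j) ^ 2) +
          8 * g' s ^ 3 * (x i - z i) ^ 2) := by
        refine Finset.sum_congr rfl fun i _ => ?_
        simp only [mul_add, mul_ite, mul_one, mul_zero, Finset.sum_add_distrib,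
          Finset.sum_ite_eq, Finset.mem_univ, if_true, Finset.mul_sum]
        congr 1
        · exact Finset.sum_congr rfl fun j _ => by ring
        · ring
    _ = _ := by
        rw [Finset.sum_add_distrib, ← Finset.mul_sum, ← Finset.mul_sum, ← Finset.sum_mul, hsum]
        ring

theorem IsViscSubsol.le_of_isLocalMax_sub_quadratic {Ω : Set E} {u : E → ℝ}
    {F : E → ℝ → ℝ} {z x : E} {b c : ℝ} (hsub : IsViscSubsol Ω u F) (hx : x ∈ Ω)
    (hmax : IsLocalMax (fun y => u y - (b * (‖y - z‖ ^ 2 - ‖x - z‖ ^ 2) +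
      c * (‖y - z‖ ^ 2 - ‖x - z‖ ^ 2) ^ 2)) x) :
    F x (u x) ≤ 32 * c * b ^ 2 * (‖x - z‖ ^ 2) ^ 2 + 8 * b ^ 3 * ‖x - z‖ ^ 2 := by
  set s := ‖x - z‖ ^ 2 with hs
  set P : ℝ → ℝ := fun t => u x + b * (t - s) + c * (t - s) ^ 2
  have hP : ∀ t, HasDerivAt P (b + 2 * c * (t - s)) t := fun t => by
    have hlin : HasDerivAt (fun t : ℝ => t - s) 1 t := (hasDerivAt_id' t).sub_const s
    exact (((hlin.const_mul b).const_add (u x)).fun_add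
      ((hlin.fun_pow 2).const_mul c)).congr_deriv (by ring)
  have hP' : HasDerivAt (fun t => b + 2 * c * (t - s)) (2 * c) s := by
    simpa using (((hasDerivAt_id' s).sub_const s).const_mul (2 * c)).const_add b
  have hPC2 : ContDiff ℝ 2 fun y : E => P (‖y - z‖ ^ 2) :=
    (by fun_prop : ContDiff ℝ 2 P).comp ((contDiff_norm_sq ℝ).comp (contDiff_id.sub contDiff_const))
  have hPmax : IsLocalMax (fun y => u y - P (‖y - z‖ ^ 2)) x := by
    filter_upwards [hmax] with y hy
    simp only [P, ← hs, sub_self] at hy ⊢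
    linarith
  have := hsub _ hPC2 x hx (by simp [P, ← hs]) hPmax
  rw [infLap_comp_norm_sub_sq z x hP hP'] at this
  simp only [P, ← hs, sub_self, mul_zero, add_zero, zero_pow two_ne_zero] at this
  linarith

theorem IsViscSubsol.le_of_isLocalMax_sub_radial {Ω : Set E} {u : E → ℝ} {F : E → ℝ → ℝ}
    {g g' : ℝ → ℝ} {g'' : ℝ} {z x : E} (hsub : IsViscSubsol Ω u F) (hx : x ∈ Ω)
    (hg : ∀ᶠ t in 𝓝 (‖x - z‖ ^ 2), HasDerivAt g (g' t) t)
    (hg' : HasDerivAt g' g'' (‖x - z‖ ^ 2))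
    (hmax : IsLocalMax (fun y => u y - g (‖y - z‖ ^ 2)) x) :
    F x (u x) ≤ 16 * g' (‖x - z‖ ^ 2) ^ 2 * g'' * (‖x - z‖ ^ 2) ^ 2 +
      8 * g' (‖x - z‖ ^ 2) ^ 3 * ‖x - z‖ ^ 2 := by
  set s := ‖x - z‖ ^ 2 with hs
  suffices h : ∀ c > g'' / 2, F x (u x) ≤ 32 * c * g' s ^ 2 * s ^ 2 + 8 * g' s ^ 3 * s by
    have hL : Continuous fun c : ℝ => 32 * c * g' s ^ 2 * s ^ 2 + 8 * g' s ^ 3 * s := by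
      fun_prop
    have := ge_of_tendsto (hL.continuousWithinAt (s := Ioi (g'' / 2)) (x := g'' / 2))
      (eventually_nhdsWithin_of_forall h)
    linarith
  intro c hc
  have hle : ∀ᶠ y in 𝓝 x, g (‖y - z‖ ^ 2) ≤ g s + g' s * (‖y - z‖ ^ 2 - s) +
      c * (‖y - z‖ ^ 2 - s) ^ 2 :=
    (by fun_prop : Continuous fun y : E => ‖y - z‖ ^ 2).continuousAt.eventually
      (eventually_le_quadratic_of_hasDerivAt hg hg' (by linarith))
  refine hsub.le_of_isLocalMax_sub_quadratic hx ?_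
  filter_upwards [hmax, hle] with y hy hgy
  simp only [← hs, sub_self] at hy ⊢
  linarith

theorem IsViscSubsol.exists_le_of_lt_paraboloid {Ω : Set E} {u : E → ℝ} {F : E → ℝ → ℝ}
    {z : E} {ρ κ : ℝ} (hsub : IsViscSubsol Ω u F) (hρ : 0 < ρ) (hκ : 0 ≤ κ)
    (hΩ : closedBall z ρ ⊆ Ω) (hu : ContinuousOn u (closedBall z ρ))
    (hlt : ∀ x ∈ sphere z ρ, u x < u z + κ * ρ ^ 2) :
    ∃ y ∈ Ω, u z ≤ u y ∧ F y (u y) ≤ 8 * κ ^ 3 * ρ ^ 2 := by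
  set ψ : E → ℝ := fun x => u z + κ * ‖x - z‖ ^ 2
  obtain ⟨y, hy, hmin⟩ := (isCompact_closedBall z ρ).exists_isMinOn
    ⟨z, mem_closedBall_self hρ.le⟩ ((by fun_prop : Continuous ψ).continuousOn.sub hu)
  have hmin_le : ψ y - u y ≤ 0 := by
    simpa [ψ] using hmin (mem_closedBall_self hρ.le)
  have hyball : y ∈ ball z ρ := by
    refine (mem_closedBall.1 hy).lt_of_ne fun hyρ => ?_
    have := hlt y (mem_sphere.2 hyρ)
    simp only [ψ, ← dist_eq_norm, hyρ] at hmin_le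
    linarith
  have hψy : u z ≤ u y := by
    have : 0 ≤ κ * ‖y - z‖ ^ 2 := by positivity
    simp only [ψ] at hmin_le
    linarith
  have hmax : IsLocalMax (fun x => u x - (κ * (‖x - z‖ ^ 2 - ‖y - z‖ ^ 2) +
      0 * (‖x - z‖ ^ 2 - ‖y - z‖ ^ 2) ^ 2)) y := by
    filter_upwards [isOpen_ball.mem_nhds hyball] with x hx
    have : ψ y - u y ≤ ψ x - u x := hmin (ball_subset_closedBall hx)
    simp only [ψ] at this
    linarith
  have := hsub.le_of_isLocalMax_sub_quadratic (hΩ hy) hmax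
  refine ⟨y, hΩ hy, hψy, this.trans ?_⟩
  have hyρ : ‖y - z‖ ^ 2 ≤ ρ ^ 2 := by
    rw [← dist_eq_norm]
    exact pow_le_pow_left₀ dist_nonneg (mem_closedBall.1 hy) 2
  have : 0 ≤ κ ^ 3 := by positivity
  nlinarith

theorem IsViscSubsol.not_eventually_le_add_rpow {Ω : Set E} {u : E → ℝ} {F : E → ℝ → ℝ}
    {z : E} {c₀ C q : ℝ} (hsub : IsViscSubsol Ω u F) (hΩ : Ω ∈ 𝓝 z)
    (hu : ContinuousOn u Ω) (hc₀ : 0 < c₀) (hF : ∀ x t, u z ≤ t → c₀ ≤ F x t) (hC : 0 < C)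
    (hq : 2 / 3 < q) : ¬ ∀ᶠ x in 𝓝 z, u x ≤ u z + C * (‖x - z‖ ^ 2) ^ q := by
  intro hle
  obtain ⟨ρ₀, hρ₀, hball⟩ := nhds_basis_closedBall.eventually_iff.1 (hle.and hΩ)
  -- comparing with the paraboloid of opening `2 C ρ^(2q-2)` on `closedBall z ρ` gives
  -- `c₀ ≤ 64 C³ ρ^(6q-4)`, which fails for small `ρ` because `q > 2/3`
  have hsmall : ∀ᶠ ρ in 𝓝[>] 0, ρ < ρ₀ ∧ 64 * C ^ 3 * (ρ ^ 2) ^ (3 * q - 2) < c₀ := by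
    have hlim : Tendsto (fun ρ : ℝ => 64 * C ^ 3 * (ρ ^ 2) ^ (3 * q - 2)) (𝓝 0) (𝓝 0) := by
      simpa [Real.zero_rpow (by linarith : (3 * q - 2) ≠ 0)] using
        (((tendsto_id (x := 𝓝 (0 : ℝ))).pow 2).rpow_const (p := 3 * q - 2)
          (Or.inr (by linarith))).const_mul (64 * C ^ 3)
    exact nhdsWithin_le_nhds ((eventually_lt_nhds hρ₀).and (hlim.eventually (gt_mem_nhds hc₀)))
  obtain ⟨ρ, ⟨hρρ₀, hρsmall⟩, hρ : 0 < ρ⟩ := (hsmall.and self_mem_nhdsWithin).exists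
  set σ := ρ ^ 2
  have hσ : 0 < σ := by positivity
  have hsub_ball : closedBall z ρ ⊆ closedBall z ρ₀ := closedBall_subset_closedBall hρρ₀.le
  obtain ⟨y, -, hzy, hy⟩ := hsub.exists_le_of_lt_paraboloid (κ := 2 * C * σ ^ (q - 1)) hρ
    (by positivity) (fun x hx => (hball (hsub_ball hx)).2)
    (hu.mono fun x hx => (hball (hsub_ball hx)).2) fun x hx => by
      have hx' : ‖x - z‖ ^ 2 = σ := by rw [← dist_eq_norm, mem_sphere.1 hx]
      have := (hball (hsub_ball (sphere_subset_closedBall hx))).1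
      rw [hx'] at this
      have : 0 < C * σ ^ q := by positivity
      rw [Real.rpow_sub_one hσ.ne', mul_assoc, div_mul_cancel₀ _ hσ.ne']
      linarith
  have hpow : (σ ^ (q - 1)) ^ 3 * σ = σ ^ (3 * q - 2) := by
    rw [← Real.rpow_mul_natCast hσ.le, ← Real.rpow_add_one hσ.ne']
    ring_nf
  have := hF y (u y) hzy
  have : 8 * (2 * C * σ ^ (q - 1)) ^ 3 * ρ ^ 2 = 64 * C ^ 3 * σ ^ (3 * q - 2) := by
    rw [← hpow]; ring
  linarith

theorem IsViscSubsol.le_rpow_barrier_of_isLocalMax {Ω : Set E} {u : E → ℝ} {f : ℝ → ℝ}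
    {γ lam Υ : ℝ} {z x : E} (hsub : IsViscSubsol Ω u fun _ t => f t)
    (hflb : ∀ t : ℝ, 0 ≤ t → lam * t ^ γ ≤ f t) (hγ : 0 < γ) (hγ₃ : γ < 3) (hlam : 0 < lam)
    (hΥ : 0 < Υ) (hΥpow : Υ ^ (3 - γ) = lam * (3 - γ) ^ 4 / (64 * (1 + γ)))
    (hx : x ∈ Ω) (hxz : x ≠ z)
    (hmax : IsLocalMax (fun y => u y - Υ * (‖y - z‖ ^ 2) ^ (2 / (3 - γ))) x) :
    u x ≤ Υ * (‖x - z‖ ^ 2) ^ (2 / (3 - γ)) := by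
  set q := 2 / (3 - γ)
  set s := ‖x - z‖ ^ 2
  have hs : 0 < s := pow_pos (norm_pos_iff.2 (sub_ne_zero.2 hxz)) 2
  have hg : ∀ᶠ t in 𝓝 s, HasDerivAt (fun t => Υ * t ^ q) (Υ * q * t ^ (q - 1)) t :=
    (lt_mem_nhds hs).mono fun t ht =>
      ((Real.hasDerivAt_rpow_const (Or.inl ht.ne')).const_mul Υ).congr_deriv (by ring)
  have hg' : HasDerivAt (fun t => Υ * q * t ^ (q - 1)) (Υ * q * (q - 1) * s ^ (q - 2)) s :=
    ((Real.hasDerivAt_rpow_const (Or.inl hs.ne')).const_mul (Υ * q)).congr_deriv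
      (by rw [sub_sub, one_add_one_eq_two]; ring)
  have hf := hsub.le_of_isLocalMax_sub_radial hx hg hg' hmax
  rw [rpow_barrier_identity hΥ hs (div_mul_cancel₀ _ (by linarith)) hΥpow] at hf
  by_contra! hlt
  have hΦ : 0 ≤ Υ * s ^ q := by positivity
  have : lam * (Υ * s ^ q) ^ γ < lam * u x ^ γ :=
    mul_lt_mul_of_pos_left (Real.rpow_lt_rpow hΦ hlt hγ) hlam
  linarith [hflb (u x) (by linarith)]

theorem IsViscSubsol.nonpos_of_le_rpow_barrier {u : E → ℝ} {f : ℝ → ℝ} {γ lam Υ r : ℝ}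
    {x₀ z : E} (hsub : IsViscSubsol (ball x₀ r) u fun _ t => f t)
    (huc : ContinuousOn u (closedBall x₀ r)) (hflb : ∀ t : ℝ, 0 ≤ t → lam * t ^ γ ≤ f t)
    (hγ : 0 < γ) (hγ₃ : γ < 3) (hlam : 0 < lam) (hΥ : 0 < Υ)
    (hΥpow : Υ ^ (3 - γ) = lam * (3 - γ) ^ 4 / (64 * (1 + γ))) (hz : z ∈ closedBall x₀ r)
    (hbd : ∀ x ∈ sphere x₀ r, u x ≤ Υ * (‖x - z‖ ^ 2) ^ (2 / (3 - γ))) :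
    u z ≤ 0 := by
  set q := 2 / (3 - γ)
  have hq : 2 / 3 < q := div_lt_div_of_pos_left two_pos (by linarith) (by linarith)
  have hΦ : Continuous fun x => Υ * (‖x - z‖ ^ 2) ^ q :=
    continuous_const.mul ((by fun_prop : Continuous fun x => ‖x - z‖ ^ 2).rpow_const
      fun _ => Or.inr (by linarith))
  have hΦz : Υ * (‖z - z‖ ^ 2) ^ q = 0 := by simp [Real.zero_rpow (by linarith : q ≠ 0)]
  by_contra! huz
  obtain ⟨xs, hxs, hmax, hzxs⟩ := ContinuousOn.exists_isLocalMax_mem_ball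
    (w := fun x => u x - Υ * (‖x - z‖ ^ 2) ^ q) (huc.sub hΦ.continuousOn) hz fun x hx => by
      simp only [hΦz, sub_zero]
      linarith [hbd x hx]
  simp only [hΦz, sub_zero] at hzxs
  by_cases hxz : xs = z
  · subst hxz
    refine hsub.not_eventually_le_add_rpow (isOpen_ball.mem_nhds hxs)
      (huc.mono ball_subset_closedBall) (c₀ := lam * u xs ^ γ) (q := q) (by positivity)
      (fun _ t ht => ?_) hΥ hq (hmax.mono fun x hx => ?_)
    · exact (mul_le_mul_of_nonneg_left (Real.rpow_le_rpow huz.le ht hγ.le) hlam.le).trans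
        (hflb t (by linarith))
    · simp only [hΦz, sub_zero] at hx
      linarith
  · have := hsub.le_rpow_barrier_of_isLocalMax hflb hγ hγ₃ hlam hΥ hΥpow hxs hxz hmax
    linarith

end

theorem plateau_formation_general {n : ℕ} (γ lam : ℝ) (hγ0 : 0 ≤ γ) (hγ3 : γ < 3) (hlam : 0 < lam)
    (f : ℝ → ℝ) (hf0 : f 0 = 0)
    (hflb : ∀ t : ℝ, 0 ≤ t → lam * t ^ γ ≤ f t)
    (Υ : ℝ) (hΥ : Υ = (lam * (3 - γ) ^ 4 / (64 * (1 + γ))) ^ (1 / (3 - γ)))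
    (x₀ : EuclideanSpace ℝ (Fin n)) (r α R : ℝ) (hα : 0 < α)
    (hR : R = r - (α / Υ) ^ ((3 - γ) / 4))
    (u : EuclideanSpace ℝ (Fin n) → ℝ)
    (huc : ContinuousOn u (closedBall x₀ r)) (hu0 : ∀ x ∈ closedBall x₀ r, 0 ≤ u x)
    (hsol : IsViscSol (ball x₀ r) u (fun _ t => f t))
    (hbd : ∀ x ∈ sphere x₀ r, u x = α) :
    ∀ x ∈ closedBall x₀ R, u x = 0 := by
  -- `γ = 0` is excluded because `0 ^ 0 = 1` makes `hflb 0` read `lam ≤ f 0 = 0`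
  have hγ : 0 < γ := hγ0.lt_of_ne fun h => by simpa [← h, hf0, hlam.not_ge] using hflb 0 le_rfl
  have hbase : 0 < lam * (3 - γ) ^ 4 / (64 * (1 + γ)) := by
    have : 0 < 3 - γ := by linarith
    positivity
  have hΥpos : 0 < Υ := hΥ ▸ Real.rpow_pos_of_pos hbase _
  have hΥpow : Υ ^ (3 - γ) = lam * (3 - γ) ^ 4 / (64 * (1 + γ)) := by
    rw [hΥ, one_div, Real.rpow_inv_rpow hbase.le (by linarith)]
  have hRr : R ≤ r := by rw [hR]; linarith [Real.rpow_nonneg (div_pos hα hΥpos).le ((3 - γ) / 4)]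
  intro z hz
  have hzr : z ∈ closedBall x₀ r := closedBall_subset_closedBall hRr hz
  refine le_antisymm (hsol.2.nonpos_of_le_rpow_barrier huc hflb hγ hγ3 hlam hΥpos hΥpow hzr
    fun x hx => ?_) (hu0 z hzr)
  rw [hbd x hx]
  refine le_mul_sq_rpow_of_rpow_le hα.le hΥpos hγ3 ?_
  have := dist_triangle x z x₀
  rw [mem_sphere.1 hx, dist_eq_norm] at this
  linarith [mem_closedBall.1 hz]

/-- Plateau formation (Remark 3.1). -/
theorem plateau_formation {n : ℕ} (γ lam : ℝ) (hγ0 : 0 ≤ γ) (hγ3 : γ < 3) (hlam : 0 < lam)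
    (f : ℝ → ℝ) (hfc : ContinuousOn f (Ici 0)) (hfnn : ∀ t ∈ Ici (0 : ℝ), 0 ≤ f t)
    (hfmono : MonotoneOn f (Ici 0)) (hf0 : f 0 = 0)
    (hflb : ∀ t : ℝ, 0 ≤ t → lam * t ^ γ ≤ f t)
    (Υ : ℝ) (hΥ : Υ = (lam * (3 - γ) ^ 4 / (64 * (1 + γ))) ^ (1 / (3 - γ)))
    (x₀ : EuclideanSpace ℝ (Fin n)) (r α R : ℝ) (hr : 0 < r) (hα : 0 < α)
    (hR : R = r - (α / Υ) ^ ((3 - γ) / 4)) (hRpos : 0 < R)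
    (u : EuclideanSpace ℝ (Fin n) → ℝ)
    (huc : ContinuousOn u (closedBall x₀ r)) (hu0 : ∀ x ∈ closedBall x₀ r, 0 ≤ u x)
    (hsol : IsViscSol (ball x₀ r) u (fun _ t => f t))
    (hbd : ∀ x ∈ sphere x₀ r, u x = α) :
    ∀ x ∈ closedBall x₀ R, u x = 0 :=
  plateau_formation_general γ lam hγ0 hγ3 hlam f hf0 hflb Υ hΥ x₀ r α R hα hR u huc hu0 hsol hbd
end

section
/- Explicit radial profile: Let γ ∈ [0,3), λ > 0, x₀ ∈ ℝⁿ, and set Υ := (λ(3−γ)⁴/(64(1+γ)))^{1/(3−γ)}. Then the function w(x) := Υ|x − x₀|^{4/(3−γ)} is smooth on ℝⁿ \ {x₀} and satisfies the infinity Laplace equation Δ∞w(x) = λ w(x)^γ (classically, i.e. Σ_{i,j} ∂_iw(x)∂_jw(x)∂_{ij}w(x) = λ w(x)^γ) at every point x ≠ x₀. -/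
open Set Metric Filter MeasureTheory

/-! If `w = h(|x - x₀|²)`, then `∇w = 2h'·(x - x₀)` and `D²w = 4h''·(x - x₀)⊗(x - x₀) + 2h'·I`,
so `Δ∞w = (2h')²(4h''|x - x₀|⁴ + 2h'|x - x₀|²)`. For `w = c|x - x₀|^p` this gives
`Δ∞w = c³p³(p - 1)|x - x₀|^(3p - 4)`. With `p = 4/(3 - γ)` one has `3p - 4 = pγ`, and `Υ` is
chosen exactly so that `Υ³p³(p - 1) = λΥ^γ`. -/

open RealInnerProductSpace Topology

theorem contDiffOn_const_mul_norm_sub_rpow {E : Type*} [NormedAddCommGroup E]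
    [InnerProductSpace ℝ E] {k : WithTop ℕ∞} (c p : ℝ) (x₀ : E) :
    ContDiffOn ℝ k (fun y => c * ‖y - x₀‖ ^ p) {x₀}ᶜ := fun x hx =>
  (contDiffAt_const.mul (((contDiffAt_norm ℝ (sub_ne_zero.2 hx)).comp x
    (contDiffAt_id.sub contDiffAt_const)).rpow_const_of_ne
      (norm_ne_zero_iff.2 (sub_ne_zero.2 hx)))).contDiffWithinAt

section
variable {n : ℕ}

theorem infLap_eq_of_fderiv_of_hessian {φ : EuclideanSpace ℝ (Fin n) → ℝ}
    {x v : EuclideanSpace ℝ (Fin n)} {a b : ℝ}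
    (hD : ∀ i, fderiv ℝ φ x (EuclideanSpace.single i 1) = a * v i)
    (hD2 : ∀ i j, fderiv ℝ (fun y => fderiv ℝ φ y (EuclideanSpace.single i 1)) x
      (EuclideanSpace.single j 1) = b * v i * v j + if i = j then a else 0) :
    infLap φ x = a ^ 2 * b * ‖v‖ ^ 4 + a ^ 3 * ‖v‖ ^ 2 := by
  have hv : ‖v‖ ^ 2 = ∑ i, v i ^ 2 := by simp [EuclideanSpace.norm_sq_eq]
  simp only [infLap, hD, hD2, mul_add, Finset.sum_add_distrib, mul_ite, mul_zero,
    Finset.sum_ite_eq, Finset.mem_univ, if_true]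
  rw [show ‖v‖ ^ 4 = ‖v‖ ^ 2 * ‖v‖ ^ 2 by ring, hv, Finset.sum_mul_sum, Finset.mul_sum,
    Finset.mul_sum]
  congr 1
  · refine Finset.sum_congr rfl fun i _ => ?_
    rw [Finset.mul_sum]
    exact Finset.sum_congr rfl fun j _ => by ring
  · exact Finset.sum_congr rfl fun i _ => by ring

theorem infLap_comp_norm_sub_sq_s12 {h h' : ℝ → ℝ} {h'' : ℝ} {x₀ x : EuclideanSpace ℝ (Fin n)}
    (hh : ∀ᶠ t in 𝓝 (‖x - x₀‖ ^ 2), HasDerivAt h (h' t) t)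
    (hh' : HasDerivAt h' h'' (‖x - x₀‖ ^ 2)) :
    infLap (fun y => h (‖y - x₀‖ ^ 2)) x =
      (2 * h' (‖x - x₀‖ ^ 2)) ^ 2 * (4 * h'') * ‖x - x₀‖ ^ 4 +
        (2 * h' (‖x - x₀‖ ^ 2)) ^ 3 * ‖x - x₀‖ ^ 2 := by
  have hq (y : EuclideanSpace ℝ (Fin n)) := ((hasFDerivAt_id y).sub_const x₀).norm_sq
  have hfderiv : ∀ᶠ y in 𝓝 x, ∀ u,
      fderiv ℝ (fun y => h (‖y - x₀‖ ^ 2)) y u = 2 * h' (‖y - x₀‖ ^ 2) * ⟪y - x₀, u⟫ := by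
    refine (((hq x).continuousAt.tendsto).eventually hh).mono fun y hy u => ?_
    rw [HasFDerivAt.fderiv (f := fun y => h (‖y - x₀‖ ^ 2)) (hy.comp_hasFDerivAt y (hq y))]
    simp only [smul_apply, ContinuousLinearMap.comp_id, coe_innerSL_apply,
      id_eq, nsmul_eq_mul, Nat.cast_ofNat, smul_eq_mul]
    ring
  refine infLap_eq_of_fderiv_of_hessian (v := x - x₀) (fun i => ?_) (fun i j => ?_)
  · simp [hfderiv.self_of_nhds, EuclideanSpace.inner_single_right]
  · have hpartial : (fun y => fderiv ℝ (fun y => h (‖y - x₀‖ ^ 2)) y (EuclideanSpace.single i 1))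
        =ᶠ[𝓝 x] fun y => 2 * h' (‖y - x₀‖ ^ 2) * ⟪EuclideanSpace.single i 1, y - x₀⟫ :=
      hfderiv.mono fun y hy => (hy _).trans (by rw [real_inner_comm])
    have hd := ((hh'.comp_hasFDerivAt x (hq x)).const_mul 2).mul
      ((innerSL ℝ (EuclideanSpace.single i (1 : ℝ))).hasFDerivAt.comp x
        ((hasFDerivAt_id x).sub_const x₀))
    rw [hpartial.fderiv_eq, HasFDerivAt.fderiv (f := fun y =>
      2 * h' (‖y - x₀‖ ^ 2) * ⟪EuclideanSpace.single i 1, y - x₀⟫) hd]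
    obtain rfl | hij := eq_or_ne i j <;>
      simp [EuclideanSpace.inner_single_left, EuclideanSpace.inner_single_right, *] <;>
      ring

theorem infLap_const_mul_norm_sub_rpow (c p : ℝ) {x₀ x : EuclideanSpace ℝ (Fin n)}
    (hx : x ≠ x₀) :
    infLap (fun y => c * ‖y - x₀‖ ^ p) x = c ^ 3 * p ^ 3 * (p - 1) * ‖x - x₀‖ ^ (3 * p - 4) := by
  have hr : 0 < ‖x - x₀‖ := norm_pos_iff.2 (sub_ne_zero.2 hx)
  have hr2 : 0 < ‖x - x₀‖ ^ 2 := by positivity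
  have hsq (s : ℝ) : (‖x - x₀‖ ^ 2) ^ s = ‖x - x₀‖ ^ (2 * s) := by
    rw [← Real.rpow_natCast_mul hr.le]; norm_num
  have hfun : (fun y => c * ‖y - x₀‖ ^ p) = fun y => c * (‖y - x₀‖ ^ 2) ^ (p / 2) := by
    funext y
    rw [← Real.rpow_natCast_mul (norm_nonneg _)]
    ring_nf
  rw [hfun, infLap_comp_norm_sub_sq_s12 (h := fun t => c * t ^ (p / 2))
      (h' := fun t => c * (p / 2 * t ^ (p / 2 - 1)))
      (h'' := c * (p / 2 * ((p / 2 - 1) * (‖x - x₀‖ ^ 2) ^ (p / 2 - 1 - 1))))]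
  · simp only [hsq]
    rw [show 2 * (p / 2 - 1) = p - 2 by ring, show 2 * (p / 2 - 1 - 1) = p - 4 by ring,
      Real.rpow_sub hr, Real.rpow_sub hr, Real.rpow_sub hr,
      show 3 * p = p * (3 : ℕ) by push_cast; ring, Real.rpow_mul_natCast hr.le]
    norm_cast
    field_simp
    ring
  · filter_upwards [lt_mem_nhds hr2] with t ht
    exact (Real.hasDerivAt_rpow_const (Or.inl ht.ne')).const_mul c
  · exact ((Real.hasDerivAt_rpow_const (Or.inl hr2.ne')).const_mul _).const_mul c

end

theorem profile_constant_balance {γ lam Υ : ℝ} (hγ : -1 < γ) (hγ3 : γ ≠ 3) (hlam : 0 ≤ lam)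
    (hΥ : Υ = (lam * (3 - γ) ^ 4 / (64 * (1 + γ))) ^ (1 / (3 - γ))) :
    Υ ^ 3 * (4 / (3 - γ)) ^ 3 * (4 / (3 - γ) - 1) = lam * Υ ^ γ := by
  have h3γ : 3 - γ ≠ 0 := sub_ne_zero.2 hγ3.symm
  have h1γ : 0 < 1 + γ := by linarith
  have hK : 0 ≤ lam * (3 - γ) ^ 4 / (64 * (1 + γ)) := by positivity
  have hΥ0 : 0 ≤ Υ := hΥ ▸ Real.rpow_nonneg hK _
  have hΥK : Υ ^ (3 - γ) = lam * (3 - γ) ^ 4 / (64 * (1 + γ)) := by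
    rw [hΥ, ← Real.rpow_mul hK, one_div_mul_cancel h3γ, Real.rpow_one]
  have hcube : Υ ^ 3 = Υ ^ γ * Υ ^ (3 - γ) := by
    rw [← Real.rpow_add' hΥ0 (by norm_num), add_sub_cancel, ← Real.rpow_natCast]
    norm_num
  rw [hcube, hΥK]
  field_simp
  ring

/-- Explicit radial profile: `w(x) = Υ|x−x₀|^{4/(3−γ)}` solves `Δ∞w = λ w^γ` away from `x₀`. -/
theorem radial_profile {n : ℕ} (γ lam : ℝ) (hγ0 : 0 ≤ γ) (hγ3 : γ < 3) (hlam : 0 < lam)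
    (Υ : ℝ) (hΥ : Υ = (lam * (3 - γ) ^ 4 / (64 * (1 + γ))) ^ (1 / (3 - γ)))
    (x₀ : EuclideanSpace ℝ (Fin n))
    (w : EuclideanSpace ℝ (Fin n) → ℝ)
    (hw : w = fun x => Υ * ‖x - x₀‖ ^ (4 / (3 - γ))) :
    ContDiffOn ℝ (⊤ : ℕ∞) w ({x₀}ᶜ) ∧
      ∀ x : EuclideanSpace ℝ (Fin n), x ≠ x₀ → infLap w x = lam * w x ^ γ := by
  subst hw
  refine ⟨contDiffOn_const_mul_norm_sub_rpow Υ _ x₀, fun x hx => ?_⟩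
  have hexp : 3 * (4 / (3 - γ)) - 4 = 4 / (3 - γ) * γ := by
    field_simp [(sub_pos.2 hγ3).ne']
    ring
  have hΥ0 : 0 ≤ Υ := hΥ ▸ Real.rpow_nonneg (by positivity) _
  rw [infLap_const_mul_norm_sub_rpow _ _ hx,
    profile_constant_balance (by linarith) hγ3.ne hlam.le hΥ, hexp,
    Real.mul_rpow hΥ0 (Real.rpow_nonneg (norm_nonneg _) _), ← Real.rpow_mul (norm_nonneg _)]
  ring
end
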